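/- arXiv:2401.04890 — 2 statements merged into one kernel-verified Lean document; each statement's English description precedes it below -/
import Mathlib

section
/- Let G ∈ {0,1}^{m×m} be a binary square matrix. If C is an m×m real matrix with no zero diagonal entry and for all (i,j) with G_{i,j} = 1 we have (C_{i,·})ᵀ C_{j,·} ∈ ℝ^{m×m}_G, then C is G-preserving and Gᵀ-preserving. -/
/-- If `C` has no zero on its diagonal and, for every `(i,j)` with `G i j = 1`,
the outer product of rows `i` and `j` of `C` is supported on `G`, then `C` is
both `G`-preserving and `Gᵀ`-preserving. -/
theorem gPreserving_of_outer_products {m : ℕ} (G : Fin m → Fin m → Bool)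
    (C : Matrix (Fin m) (Fin m) ℝ)
    (hdiag : ∀ k, C k k ≠ 0)
    (houter : ∀ i j, G i j = true → ∀ a b, G a b = false → C i a * C j b = 0) :
    (∀ i j, (∃ k, G i k = true ∧ G j k = false) → C i j = 0) ∧
      (∀ i j, (∃ k, G k i = true ∧ G k j = false) → C i j = 0) := by
  constructor
  · rintro i j ⟨k, h1, h2⟩
    have := houter i k h1 j k h2
    exact (mul_eq_zero.mp this).resolve_right (hdiag k)
  · rintro i j ⟨k, h1, h2⟩
    have := houter k i h1 k j h2
    exact (mul_eq_zero.mp this).resolve_left (hdiag k)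
end

section
/- Let G ∈ {0,1}^{m×n}, let Z be a connected topological space, and let L : Z → GL(m,ℝ) be a continuous map into invertible matrices such that for every z ∈ Z there exists a permutation matrix P(z) with L(z)P(z) G-preserving. Then there exists a single permutation matrix P such that L(z)P is G-preserving for all z ∈ Z. -/
/-- `C` is `G`-preserving: whenever the support of row `i` of `G` is not contained in
the support of row `j`, the entry `C i j` vanishes. -/
def GPresMat {m n : ℕ} (G : Fin m → Fin n → Bool)
    (C : Matrix (Fin m) (Fin m) ℝ) : Prop :=
  ∀ i j, (∃ k, G i k = true ∧ G j k = false) → C i j = 0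

/-- The permutation matrix of `σ`, satisfying `P · e_j = e_{σ j}`. -/
def permMat {m : ℕ} (σ : Equiv.Perm (Fin m)) : Matrix (Fin m) (Fin m) ℝ :=
  Matrix.of fun i j => if i = σ j then (1 : ℝ) else 0

namespace SamePerm

variable {m n : ℕ} (G : Fin m → Fin n → Bool)

/-- row-support preorder -/
def rle (i j : Fin m) : Prop := ∀ t, G i t = true → G j t = true

lemma rle_refl (i : Fin m) : rle G i i := fun _ h => h

lemma rle_trans {i j k : Fin m} (h1 : rle G i j) (h2 : rle G j k) : rle G i k :=
  fun t ht => h2 t (h1 t ht)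

lemma gpres_iff (C : Matrix (Fin m) (Fin m) ℝ) :
    GPresMat G C ↔ ∀ i j, ¬ rle G i j → C i j = 0 := by
  unfold GPresMat rle
  constructor
  · intro h i j hn
    push_neg at hn
    obtain ⟨t, ht1, ht2⟩ := hn
    exact h i j ⟨t, ht1, by simpa using ht2⟩
  · rintro h i j ⟨k, hk1, hk2⟩
    exact h i j (fun hall => by simp [hall k hk1] at hk2)

lemma mul_perm_apply (A : Matrix (Fin m) (Fin m) ℝ) (σ : Equiv.Perm (Fin m)) (i j : Fin m) :
    (A * permMat σ) i j = A i (σ j) := by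
  simp [Matrix.mul_apply, permMat, mul_ite]

lemma exists_perm_support (A : Matrix (Fin m) (Fin m) ℝ) (h : A.det ≠ 0) :
    ∃ α : Equiv.Perm (Fin m), ∀ k, A (α k) k ≠ 0 := by
  by_contra hc
  push_neg at hc
  apply h
  rw [Matrix.det_apply]
  refine Finset.sum_eq_zero fun σ _ => ?_
  obtain ⟨k, hk⟩ := hc σ
  have hz : (∏ i, A (σ i) i) = 0 := Finset.prod_eq_zero (Finset.mem_univ k) hk
  rw [hz, smul_zero]

lemma rle_pow (β : Equiv.Perm (Fin m)) (h : ∀ j, rle G (β j) j) :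
    ∀ (k : ℕ) (j : Fin m), rle G ((β ^ k) j) j := by
  intro k
  induction k with
  | zero => intro j; simpa using rle_refl G j
  | succ k ih =>
    intro j
    have he : (β ^ (k + 1)) j = (β ^ k) (β j) := by
      rw [pow_succ, Equiv.Perm.mul_apply]
    rw [he]
    exact rle_trans G (ih (β j)) (h j)

lemma rle_inv_of (β : Equiv.Perm (Fin m)) (h : ∀ j, rle G (β j) j) (j : Fin m) :
    rle G j (β j) := by
  have h1 : 1 ≤ orderOf β := orderOf_pos β
  have key : (β ^ (orderOf β - 1)) (β j) = j := by
    have : (β ^ (orderOf β - 1)) * β = 1 := by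
      rw [← pow_succ, Nat.sub_add_cancel h1, pow_orderOf_eq_one]
    have := congrArg (fun e => e j) this
    simpa [Equiv.Perm.mul_apply] using this
  have := rle_pow G β h (orderOf β - 1) (β j)
  rwa [key] at this

/-- equivalence of permutations -/
def eqvP (σ σ' : Equiv.Perm (Fin m)) : Prop :=
  ∀ k, rle G (σ⁻¹ k) (σ'⁻¹ k) ∧ rle G (σ'⁻¹ k) (σ⁻¹ k)

lemma eqv_of_support {A : Matrix (Fin m) (Fin m) ℝ}
    {σ : Equiv.Perm (Fin m)} (h : GPresMat G (A * permMat σ))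
    {α : Equiv.Perm (Fin m)} (hα : ∀ k, A (α k) k ≠ 0) (k : Fin m) :
    rle G (σ⁻¹ k) (α k) ∧ rle G (α k) (σ⁻¹ k) := by
  rw [gpres_iff] at h
  have h' : ∀ j, rle G ((α * σ) j) j := by
    intro j
    by_contra hc
    have := h (α (σ j)) j hc
    rw [mul_perm_apply] at this
    exact hα (σ j) this
  have h2 := rle_inv_of G (α * σ) h' (σ⁻¹ k)
  have h3 := h' (σ⁻¹ k)
  simp only [Equiv.Perm.mul_apply, Equiv.Perm.coe_inv, Equiv.apply_symm_apply] at h2 h3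
  exact ⟨h2, h3⟩

lemma perm_eqv {A : Matrix (Fin m) (Fin m) ℝ} (hA : A.det ≠ 0)
    {σ σ' : Equiv.Perm (Fin m)}
    (h1 : GPresMat G (A * permMat σ)) (h2 : GPresMat G (A * permMat σ')) :
    eqvP G σ σ' := by
  obtain ⟨α, hα⟩ := exists_perm_support A hA
  intro k
  obtain ⟨a1, a2⟩ := eqv_of_support G h1 hα k
  obtain ⟨b1, b2⟩ := eqv_of_support G h2 hα k
  exact ⟨rle_trans G a1 b2, rle_trans G b1 a2⟩

lemma gpres_congr {A : Matrix (Fin m) (Fin m) ℝ} {σ σ' : Equiv.Perm (Fin m)}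
    (he : eqvP G σ σ') (h : GPresMat G (A * permMat σ)) :
    GPresMat G (A * permMat σ') := by
  rw [gpres_iff] at h ⊢
  intro i j hn
  rw [mul_perm_apply]
  have := h i (σ⁻¹ (σ' j)) ?_
  · rwa [mul_perm_apply, (by simp : σ (σ⁻¹ (σ' j)) = σ' j)] at this
  · intro hc
    apply hn
    have hk := (he (σ' j)).1
    rw [(by simp : σ'⁻¹ (σ' j) = j)] at hk
    exact rle_trans G hc hk

end SamePerm

open SamePerm in
/-- If `Z` is connected, `L : Z → GL(m,ℝ)` is continuous with each `L z` invertible,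
and for every `z` there is a permutation matrix `P(z)` making `L z * P(z)`
`G`-preserving, then a single permutation matrix works for all `z`. -/
theorem same_permutation_on_connected {m n : ℕ} (G : Fin m → Fin n → Bool)
    {Z : Type*} [TopologicalSpace Z] [ConnectedSpace Z]
    (L : Z → Matrix (Fin m) (Fin m) ℝ) (hL : Continuous L)
    (hinv : ∀ z, IsUnit (L z).det)
    (hP : ∀ z, ∃ σ : Equiv.Perm (Fin m), GPresMat G (L z * permMat σ)) :
    ∃ σ : Equiv.Perm (Fin m), ∀ z, GPresMat G (L z * permMat σ) := by
  have hdet : ∀ z, (L z).det ≠ 0 := fun z => (hinv z).ne_zero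
  obtain ⟨z₀⟩ := (inferInstance : Nonempty Z)
  obtain ⟨σ₀, hσ₀⟩ := hP z₀
  refine ⟨σ₀, ?_⟩
  have hclosed : ∀ σ : Equiv.Perm (Fin m),
      IsClosed {z : Z | GPresMat G (L z * permMat σ)} := by
    intro σ
    have heq : {z : Z | GPresMat G (L z * permMat σ)} =
        ⋂ i, ⋂ j, {z : Z | ¬ rle G i j → L z i (σ j) = 0} := by
      ext z
      simp only [Set.mem_iInter, Set.mem_setOf_eq, gpres_iff G, mul_perm_apply]
    rw [heq]
    refine isClosed_iInter fun i => isClosed_iInter fun j => ?_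
    by_cases h : rle G i j
    · have : {z : Z | ¬ rle G i j → L z i (σ j) = 0} = Set.univ := by
        ext z; simp [h]
      rw [this]; exact isClosed_univ
    · have : {z : Z | ¬ rle G i j → L z i (σ j) = 0} = {z : Z | L z i (σ j) = 0} := by
        ext z; simp [h]
      rw [this]
      exact isClosed_eq ((continuous_apply (σ j)).comp ((continuous_apply i).comp hL))
        continuous_const
  set S : Set Z := {z : Z | GPresMat G (L z * permMat σ₀)} with hSdef
  have hcompl : Sᶜ = ⋃ (σ : Equiv.Perm (Fin m)) (_ : ¬ eqvP G σ σ₀),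
      {z : Z | GPresMat G (L z * permMat σ)} := by
    ext z
    simp only [Set.mem_compl_iff, Set.mem_iUnion, Set.mem_setOf_eq, hSdef]
    constructor
    · intro hz
      obtain ⟨σ, hσ⟩ := hP z
      refine ⟨σ, fun he => hz (gpres_congr G he hσ), hσ⟩
    · rintro ⟨σ, hne, hσ⟩ hz
      exact hne (perm_eqv G (hdet z) hσ hz)
  have hopen : IsOpen S := by
    rw [← isClosed_compl_iff, hcompl]
    exact isClosed_iUnion_of_finite fun σ =>
      isClosed_iUnion_of_finite fun _ => hclosed σ
  have hne : S.Nonempty := ⟨z₀, hσ₀⟩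
  have : S = Set.univ := IsClopen.eq_univ ⟨hclosed σ₀, hopen⟩ hne
  intro z
  have hz : z ∈ S := this ▸ Set.mem_univ z
  exact hz
end
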